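/- arXiv:0708.2492 — 3 statements merged into one kernel-verified Lean document; each statement's English description precedes it below -/
import Mathlib

section
/- Let k be a field, n ≥ 1, and a₁,…,aₙ ≥ 1 integers. For each i let Vᵢ be a k-vector space of dimension aᵢ+1 and let fᵢ : Vᵢ → k be a nonzero linear functional. Let V = V₁ ⊗ ⋯ ⊗ Vₙ and let Λ ⊆ V be the linear span of all simple tensors v₁ ⊗ ⋯ ⊗ vₙ such that fᵢ(vᵢ) = 0 for at least two indices i. Let F : V → k be the linear functional determined by F(v₁⊗⋯⊗vₙ) = f₁(v₁)⋯fₙ(vₙ). Then: (1) Λ has codimension 1 + a₁ + ⋯ + aₙ in V; (2) Λ ⊆ ker F, so F induces a functional F̄ on V/Λ; and (3) the map sending a tuple ([v₁],…,[vₙ]) of projective points with fᵢ(vᵢ) ≠ 0 for all i to the class of (v₁⊗⋯⊗vₙ mod Λ) in the projectivization ℙ(V/Λ) is a well-defined bijection from the open chart {([v₁],…,[vₙ]) ∈ ∏ᵢ ℙ(Vᵢ) : fᵢ(vᵢ) ≠ 0 for all i} onto the chart {[w] ∈ ℙ(V/Λ) : F̄(w) ≠ 0}. (This expresses that the linear projection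 of the Segre variety S = ℙ^{a₁}×⋯×ℙ^{aₙ} from the projective span L of the union of the subvarieties 𝒫_{ij} = ℙ^{a₁}×⋯×H_i×⋯×H_j×⋯×ℙ^{aₙ}, where H_i is the hyperplane fᵢ = 0, is a birational map onto ℙ^{a₁+⋯+aₙ}.) -/
/-!
Choose for each `i` a basis of `Vᵢ`, indexed by `Option (Fin aᵢ)`, whose `none`-th
coordinate functional is `fᵢ`. The tensor basis of `V` is indexed by tuples `σ` of options,
and `Λ` is exactly the span of the basis tensors with at least two non-`none` entries. So the
coordinates of `V` at the `1 + ∑ aᵢ` tuples with at most one non-`none` entry identify `V/Λ`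
with `k^{1 + ∑ aᵢ}`, and `F̄` is the coordinate at the all-`none` tuple. On the affine charts
`fᵢ = 1` and `F̄ = 1` these coordinates of `v₁ ⊗ ⋯ ⊗ vₙ` are `1` and the coordinates of the `vᵢ`
themselves, so in affine coordinates the projected Segre map is the identity of
`k^{a₁} × ⋯ × k^{aₙ}`.
-/

open PiTensorProduct Module

open scoped TensorProduct LinearAlgebra.Projectivization

namespace Projectivization

variable {K V : Type*} [Field K] [AddCommGroup V] [Module K V]

theorem apply_mk_rep_ne_zero_iff (g : V →ₗ[K] K) (v : V) (hv : v ≠ 0) :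
    g (mk K v hv).rep ≠ 0 ↔ g v ≠ 0 := by
  obtain ⟨c, hc⟩ := exists_smul_eq_mk_rep K v hv
  rw [← hc, Units.smul_def, map_smul, smul_eq_mul, mul_ne_zero_iff, and_iff_right c.ne_zero]

theorem mk_smul_eq (v : V) {c : K} (hv : c • v ≠ 0) :
    mk K (c • v) hv = mk K v (right_ne_zero_of_smul hv) :=
  (mk_eq_mk_iff' K _ _ _ _).2 ⟨c, rfl⟩

noncomputable def affineChart (g : V →ₗ[K] K) :
    {p : ℙ K V // g p.rep ≠ 0} ≃ {v : V // g v = 1} where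
  toFun p := ⟨(g p.1.rep)⁻¹ • p.1.rep, by
    rw [map_smul, smul_eq_mul, inv_mul_cancel₀ p.2]⟩
  invFun v := ⟨mk K v.1 fun h => by simpa [h] using v.2,
    (apply_mk_rep_ne_zero_iff g _ _).2 (by rw [v.2]; exact one_ne_zero)⟩
  left_inv p := Subtype.ext <| by
    simp only
    rw [mk_smul_eq, mk_rep]
  right_inv v := Subtype.ext <| by
    obtain ⟨c, hc⟩ := exists_smul_eq_mk_rep K v.1 fun h => by simpa [h] using v.2
    simp only [← hc, Units.smul_def, map_smul, smul_eq_mul, v.2, mul_one, smul_smul,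
      inv_mul_cancel₀ c.ne_zero, one_smul]

theorem affineChart_mk (g : V →ₗ[K] K) (v : V) (hv : v ≠ 0) (h : g (mk K v hv).rep ≠ 0) :
    (affineChart g ⟨mk K v hv, h⟩ : V) = (g v)⁻¹ • v := by
  obtain ⟨c, hc⟩ := exists_smul_eq_mk_rep K v hv
  simp only [affineChart, Equiv.coe_fn_mk, ← hc, Units.smul_def, map_smul, smul_eq_mul,
    smul_smul, mul_inv_rev, inv_mul_cancel_right₀ c.ne_zero]

@[simp]
theorem affineChart_symm_apply (g : V →ₗ[K] K) (v : {v : V // g v = 1}) :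
    ((affineChart g).symm v : ℙ K V) = mk K v.1 (fun h => by simpa [h] using v.2) :=
  rfl

end Projectivization

theorem exists_basis_coord_none_eq {k V : Type*} [Field k] [AddCommGroup V] [Module k V]
    {a : ℕ} (hdim : finrank k V = a + 1) {f : V →ₗ[k] k} (hf : f ≠ 0) :
    ∃ b : Basis (Option (Fin a)) k V, b.coord none = f := by
  have : FiniteDimensional k V := Module.finite_of_finrank_eq_succ hdim
  obtain ⟨u, hu⟩ : ∃ u, f u = 1 := by
    obtain ⟨v, hv⟩ : ∃ v, f v ≠ 0 := by simpa [LinearMap.ext_iff] using hf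
    exact ⟨(f v)⁻¹ • v, by simp [hv]⟩
  have hker : finrank k (LinearMap.ker f) = a := by
    have := f.finrank_range_add_finrank_ker
    rw [LinearMap.range_eq_top.2 fun c => ⟨c • u, by simp [hu]⟩, finrank_top, finrank_self,
      hdim] at this
    omega
  let c := Module.finBasisOfFinrankEq k (LinearMap.ker f) hker
  let g : Option (Fin a) → V := fun o => o.elim u fun j => c j
  have hspan : ⊤ ≤ Submodule.span k (Set.range g) := by
    intro v _
    have hv : v - f v • u ∈ LinearMap.ker f := by simp [hu]
    have hc : v - f v • u ∈ Submodule.span k (Set.range g) := by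
      have h : ∑ j, c.repr ⟨_, hv⟩ j • (c j : V) = v - f v • u := by
        simpa only [Submodule.coe_sum, Submodule.coe_smul] using
          congrArg Subtype.val (c.sum_repr ⟨_, hv⟩)
      rw [← h]
      exact Submodule.sum_mem _ fun j _ =>
        Submodule.smul_mem _ _ (Submodule.subset_span ⟨some j, rfl⟩)
    simpa [g] using Submodule.add_mem _ hc
      (Submodule.smul_mem _ (f v) (Submodule.subset_span ⟨none, rfl⟩))
  let b := basisOfTopLeSpanOfCardEqFinrank g hspan (by simp [hdim])
  refine ⟨b, b.ext fun o => ?_⟩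
  rw [Basis.coord_apply, Basis.repr_self, coe_basisOfTopLeSpanOfCardEqFinrank]
  cases o with
  | none => simp [g, hu]
  | some j => simp [g]

section Segre

variable {k ι : Type*} [Field k] [DecidableEq ι] {κ : ι → Type*}

def optionSigmaToPi : Option (Σ i, κ i) → ∀ i, Option (κ i)
  | none => fun _ => none
  | some ⟨i, j⟩ => Function.update (fun _ => none) i (some j)

theorem optionSigmaToPi_injective : Function.Injective (optionSigmaToPi (κ := κ)) := by
  rintro (_ | ⟨i, j⟩) (_ | ⟨i', j'⟩) h
  · rfl
  · simpa [optionSigmaToPi] using congrFun h i'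
  · simpa [optionSigmaToPi] using congrFun h i
  · have hi : i' = i := by
      by_contra hne
      simpa [optionSigmaToPi, Function.update_of_ne hne] using congrFun h i'
    subst hi
    simpa [optionSigmaToPi] using congrFun h i'

theorem compl_range_optionSigmaToPi :
    (Set.range (optionSigmaToPi (κ := κ)))ᶜ =
      {σ | ∃ i j, i ≠ j ∧ σ i ≠ none ∧ σ j ≠ none} := by
  ext σ
  rw [Set.mem_compl_iff, Set.mem_ofPred_eq, ← not_iff_not, not_not]
  constructor
  · rintro ⟨_ | ⟨i, j⟩, rfl⟩ ⟨i₁, i₂, hne, h₁, h₂⟩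
    · exact h₁ rfl
    · have key : ∀ m, optionSigmaToPi (some ⟨i, j⟩) m ≠ none → m = i := fun m hm => by
        by_contra h
        exact hm (by simp [optionSigmaToPi, Function.update_of_ne h])
      exact hne ((key i₁ h₁).trans (key i₂ h₂).symm)
  · intro h
    push Not at h
    by_cases hσ : ∃ i, σ i ≠ none
    · obtain ⟨i, hi⟩ := hσ
      obtain ⟨j, hj⟩ := Option.ne_none_iff_exists'.1 hi
      refine ⟨some ⟨i, j⟩, funext fun m => ?_⟩
      rcases eq_or_ne m i with rfl | hm
      · simp [optionSigmaToPi, hj]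
      · have hσm : σ m = none := by
          by_contra hσm
          exact hi (h m i hm hσm)
        simp [optionSigmaToPi, Function.update_of_ne hm, hσm]
    · push Not at hσ
      exact ⟨none, funext fun i => (hσ i).symm⟩

variable [Fintype ι] {V : ι → Type*} [∀ i, AddCommGroup (V i)] [∀ i, Module k (V i)]
  [∀ i, Finite (κ i)] (b : ∀ i, Basis (Option (κ i)) k (V i))

noncomputable def segreCoord : (⨂[k] i, V i) →ₗ[k] (Option (Σ i, κ i) → k) :=
  LinearMap.funLeft k k (optionSigmaToPi (κ := κ)) ∘ₗ
    (Basis.piTensorProduct b).equivFun.toLinearMap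

theorem segreCoord_tprod (v : ∀ i, V i) (s : Option (Σ i, κ i)) :
    segreCoord b (⨂ₜ[k] i, v i) s = ∏ i, (b i).repr (v i) (optionSigmaToPi s i) := by
  simp [segreCoord, Basis.piTensorProduct_repr_tprod_apply]

theorem segreCoord_surjective : Function.Surjective (segreCoord b) :=
  (LinearMap.funLeft_surjective_of_injective k k _ optionSigmaToPi_injective).comp
    (Basis.piTensorProduct b).equivFun.surjective

theorem ker_segreCoord :
    LinearMap.ker (segreCoord b) =
      Submodule.span k (Basis.piTensorProduct b '' (Set.range optionSigmaToPi)ᶜ) := by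
  ext t
  rw [LinearMap.mem_ker, Basis.mem_span_image, Set.subset_compl_comm, funext_iff]
  simp [Set.range_subset_iff, segreCoord]

theorem span_tprod_eq_ker_segreCoord :
    Submodule.span k {w | ∃ v : ∀ i, V i, (∃ i j, i ≠ j ∧ (b i).coord none (v i) = 0 ∧
      (b j).coord none (v j) = 0) ∧ w = ⨂ₜ[k] i, v i} = LinearMap.ker (segreCoord b) := by
  rw [ker_segreCoord, compl_range_optionSigmaToPi]
  apply le_antisymm
  · rw [Submodule.span_le]
    rintro _ ⟨v, ⟨i, j, hij, hi, hj⟩, rfl⟩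
    rw [SetLike.mem_coe, Basis.mem_span_image]
    intro σ hσ
    rw [Finset.mem_coe, Finsupp.mem_support_iff, Basis.piTensorProduct_repr_tprod_apply] at hσ
    have hne : ∀ m, (b m).repr (v m) none = 0 → σ m ≠ none := fun m hm h =>
      hσ (Finset.prod_eq_zero (Finset.mem_univ m) (h ▸ hm))
    exact ⟨i, j, hij, hne i hi, hne j hj⟩
  · refine Submodule.span_mono ?_
    rintro _ ⟨σ, ⟨i, j, hij, hi, hj⟩, rfl⟩
    have hcoord : ∀ m, σ m ≠ none → (b m).coord none (b m (σ m)) = 0 := fun m hm => by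
      simp [Ne.symm hm]
    exact ⟨fun m => b m (σ m), ⟨i, j, hij, hcoord i hi, hcoord j hj⟩,
      Basis.piTensorProduct_apply b σ⟩

theorem lift_mkPiAlgebra_compLinearMap_coord_none :
    lift ((MultilinearMap.mkPiAlgebra k ι k).compLinearMap fun i => (b i).coord none) =
      LinearMap.proj none ∘ₗ segreCoord b :=
  PiTensorProduct.ext <| MultilinearMap.ext fun v => by
    simp [segreCoord_tprod, optionSigmaToPi, MultilinearMap.mkPiAlgebra_apply]

theorem finrank_quotient_ker_segreCoord [∀ i, Fintype (κ i)] :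
    finrank k ((⨂[k] i, V i) ⧸ LinearMap.ker (segreCoord b)) =
      1 + ∑ i, Fintype.card (κ i) := by
  rw [((segreCoord b).quotKerEquivOfSurjective (segreCoord_surjective b)).finrank_eq,
    finrank_fintype_fun_eq_card, Fintype.card_option, Fintype.card_sigma, add_comm]

theorem segreCoord_tprod_of_coord_none_eq_one (x : ∀ i, V i)
    (hx : ∀ i, (b i).coord none (x i) = 1) :
    segreCoord b (⨂ₜ[k] i, x i) =
      fun s => s.elim 1 fun p => (b p.1).repr (x p.1) (some p.2) := by
  funext s
  rw [segreCoord_tprod]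
  rcases s with _ | ⟨i, j⟩
  · exact Finset.prod_eq_one fun m _ => hx m
  · rw [Fintype.prod_eq_single i fun m hm => by simpa [optionSigmaToPi, hm] using hx m]
    simp [optionSigmaToPi]

theorem bijective_segreCoord_tprod :
    Function.Bijective fun x : ∀ i, {v : V i // (b i).coord none v = 1} =>
      (⟨segreCoord b (⨂ₜ[k] i, (x i : V i)), by
        rw [segreCoord_tprod_of_coord_none_eq_one b _ fun i => (x i).2]; rfl⟩ :
        {g : Option (Σ i, κ i) → k // g none = 1}) := by
  refine ⟨fun x x' h => funext fun i => Subtype.ext <| (b i).repr.injective ?_, fun g => ?_⟩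
  · have h := congrArg Subtype.val h
    simp only [segreCoord_tprod_of_coord_none_eq_one b _ fun i => (x i).2,
      segreCoord_tprod_of_coord_none_eq_one b _ fun i => (x' i).2] at h
    ext (_ | j)
    · exact (x i).2.trans (x' i).2.symm
    · exact congrFun h (some ⟨i, j⟩)
  · let x : ∀ i, {v : V i // (b i).coord none v = 1} := fun i =>
      ⟨(b i).equivFun.symm fun o => o.elim 1 fun j => g.1 (some ⟨i, j⟩),
        by simp [← Basis.equivFun_apply]⟩
    refine ⟨x, Subtype.ext ?_⟩
    simp only [segreCoord_tprod_of_coord_none_eq_one b _ fun i => (x i).2]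
    funext s
    rcases s with _ | ⟨i, j⟩
    · exact g.2.symm
    · simp [x, ← Basis.equivFun_apply]

noncomputable abbrev segreQuotCoordNone :
    ((⨂[k] i, V i) ⧸ LinearMap.ker (segreCoord b)) →ₗ[k] k :=
  (LinearMap.ker (segreCoord b)).liftQ (LinearMap.proj none ∘ₗ segreCoord b)
    (LinearMap.ker_le_ker_comp _ _)

noncomputable def segreAffine (x : ∀ i, {v : V i // (b i).coord none v = 1}) :
    {y : (⨂[k] i, V i) ⧸ LinearMap.ker (segreCoord b) // segreQuotCoordNone b y = 1} :=
  ⟨Submodule.Quotient.mk (⨂ₜ[k] i, (x i : V i)), by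
    rw [Submodule.liftQ_apply, LinearMap.comp_apply,
      segreCoord_tprod_of_coord_none_eq_one b _ fun i => (x i).2]
    rfl⟩

theorem segreAffine_bijective : Function.Bijective (segreAffine b) := by
  let E := (segreCoord b).quotKerEquivOfSurjective (segreCoord_surjective b)
  have hE : ∀ y, segreQuotCoordNone b y = E y none := fun y => by
    obtain ⟨t, rfl⟩ := Submodule.mkQ_surjective _ y
    simp [E]
  let E' : {y // segreQuotCoordNone b y = 1} ≃ {g : Option (Σ i, κ i) → k // g none = 1} :=
    E.toEquiv.subtypeEquiv fun y => by rw [hE]; rfl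
  rw [← E'.bijective.of_comp_iff']
  convert bijective_segreCoord_tprod b using 1
  funext x
  exact Subtype.ext (LinearMap.quotKerEquivOfSurjective_apply_mk _ (segreCoord_surjective b) _)

noncomputable def segreChartEquiv :
    {p : ∀ i, ℙ k (V i) // ∀ i, (b i).coord none (p i).rep ≠ 0} ≃
      {w : ℙ k ((⨂[k] i, V i) ⧸ LinearMap.ker (segreCoord b)) //
        segreQuotCoordNone b w.rep ≠ 0} :=
  Equiv.subtypePiEquivPi.trans <|
    (Equiv.piCongrRight fun i => Projectivization.affineChart ((b i).coord none)).trans <|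
      (Equiv.ofBijective _ (segreAffine_bijective b)).trans
        (Projectivization.affineChart _).symm

theorem segreChartEquiv_mk (v : ∀ i, V i) (hv0 : ∀ i, v i ≠ 0)
    (hrep : ∀ i, (b i).coord none (Projectivization.mk k (v i) (hv0 i)).rep ≠ 0)
    (hq0 : (Submodule.Quotient.mk (⨂ₜ[k] i, v i) :
      (⨂[k] i, V i) ⧸ LinearMap.ker (segreCoord b)) ≠ 0) :
    (segreChartEquiv b ⟨fun i => Projectivization.mk k (v i) (hv0 i), hrep⟩ :
      ℙ k ((⨂[k] i, V i) ⧸ LinearMap.ker (segreCoord b))) =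
      Projectivization.mk k (Submodule.Quotient.mk (⨂ₜ[k] i, v i)) hq0 := by
  have ht : (⨂ₜ[k] i, ((b i).coord none (v i))⁻¹ • v i) =
      (∏ i, ((b i).coord none (v i))⁻¹) • ⨂ₜ[k] i, v i :=
    MultilinearMap.map_smul_univ _ _ _
  simp only [segreChartEquiv, Equiv.trans_apply, Projectivization.affineChart_symm_apply,
    Equiv.ofBijective_apply, segreAffine, Equiv.piCongrRight_apply, Pi.map_apply]
  have hx : ∀ i, (Projectivization.affineChart ((b i).coord none)
      (Equiv.subtypePiEquivPi (p := fun i (q : ℙ k (V i)) => (b i).coord none q.rep ≠ 0)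
        ⟨fun i => Projectivization.mk k (v i) (hv0 i), hrep⟩ i) : V i) =
      ((b i).coord none (v i))⁻¹ • v i := fun i =>
    Projectivization.affineChart_mk _ (v i) (hv0 i) (hrep i)
  simp only [hx, ht, Submodule.Quotient.mk_smul]
  exact Projectivization.mk_smul_eq _ _

end Segre

theorem segre_projection_birational_general (k : Type) [Field k]
    (n : ℕ) (a : Fin n → ℕ)
    (V : Fin n → Type) [∀ i, AddCommGroup (V i)] [∀ i, Module k (V i)]
    (hdim : ∀ i, finrank k (V i) = a i + 1)
    (f : ∀ i, V i →ₗ[k] k) (hf : ∀ i, f i ≠ 0)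
    (Λ : Submodule k (⨂[k] i, V i))
    (hΛdef : Λ = Submodule.span k
      {w | ∃ v : ∀ i, V i,
        (∃ i j, i ≠ j ∧ f i (v i) = 0 ∧ f j (v j) = 0) ∧ w = ⨂ₜ[k] i, v i})
    (F : (⨂[k] i, V i) →ₗ[k] k)
    (hF : F = PiTensorProduct.lift
      ((MultilinearMap.mkPiAlgebra k (Fin n) k).compLinearMap f)) :
    -- (1) the codimension of `Λ` is `1 + a₁ + ⋯ + aₙ`
    finrank k ((⨂[k] i, V i) ⧸ Λ) = 1 + ∑ i, a i ∧
    -- (2) `Λ ⊆ ker F`, so `F` descends to `F̄ = Λ.liftQ F _` on the quotient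
    Λ ≤ LinearMap.ker F ∧
    -- (3) the projection is a bijection between the two charts
    ∀ hker : Λ ≤ LinearMap.ker F,
      ∃ e : {p : ∀ i, Projectivization k (V i) // ∀ i, f i ((p i).rep) ≠ 0} ≃
            {w : Projectivization k ((⨂[k] i, V i) ⧸ Λ) //
              Λ.liftQ F hker w.rep ≠ 0},
        ∀ (v : ∀ i, V i) (hv : ∀ i, f i (v i) ≠ 0) (hv0 : ∀ i, v i ≠ 0)
          (hrep : ∀ i, f i ((Projectivization.mk k (v i) (hv0 i)).rep) ≠ 0)
          (hq0 : (Submodule.Quotient.mk (⨂ₜ[k] i, v i) : (⨂[k] i, V i) ⧸ Λ) ≠ 0),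
          (e ⟨fun i => Projectivization.mk k (v i) (hv0 i), hrep⟩ : Projectivization k ((⨂[k] i, V i) ⧸ Λ)) =
            Projectivization.mk k
              (Submodule.Quotient.mk (⨂ₜ[k] i, v i) : (⨂[k] i, V i) ⧸ Λ) hq0 := by
  choose b hb using fun i => exists_basis_coord_none_eq (hdim i) (hf i)
  obtain rfl : (fun i => (b i).coord none) = f := funext hb
  obtain rfl : Λ = LinearMap.ker (segreCoord b) :=
    hΛdef.trans (span_tprod_eq_ker_segreCoord b)
  obtain rfl : F = LinearMap.proj none ∘ₗ segreCoord b :=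
    hF.trans (lift_mkPiAlgebra_compLinearMap_coord_none b)
  refine ⟨by simpa using finrank_quotient_ker_segreCoord b, LinearMap.ker_le_ker_comp _ _,
    fun _ => ⟨segreChartEquiv b, fun v _ => segreChartEquiv_mk b v⟩⟩

/-- Linear projection of the Segre variety `S = ℙ(V₁) × ⋯ × ℙ(Vₙ)` from the
projective span `L` of the union of the subvarieties
`𝒫_{ij} = ℙ(V₁) × ⋯ × H_i × ⋯ × H_j × ⋯ × ℙ(Vₙ)` (where `Hᵢ = {fᵢ = 0}`) is a
birational map onto `ℙ^{a₁ + ⋯ + aₙ}`.  Concretely, with `Λ` the affine cone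
over `L` (the span of simple tensors with at least two coordinates in the
hyperplanes) and `F(v₁ ⊗ ⋯ ⊗ vₙ) = f₁(v₁)⋯fₙ(vₙ)`:
(1) `Λ` has codimension `1 + a₁ + ⋯ + aₙ`;
(2) `Λ ⊆ ker F`;
(3) `([v₁],…,[vₙ]) ↦ [v₁ ⊗ ⋯ ⊗ vₙ mod Λ]` is a bijection from the chart
`{∀ i, fᵢ(vᵢ) ≠ 0}` of `∏ᵢ ℙ(Vᵢ)` onto the chart `{F̄ ≠ 0}` of `ℙ(V/Λ)`. -/
theorem segre_projection_birational (k : Type) [Field k]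
    (n : ℕ) (hn : 1 ≤ n) (a : Fin n → ℕ) (ha : ∀ i, 1 ≤ a i)
    (V : Fin n → Type) [∀ i, AddCommGroup (V i)] [∀ i, Module k (V i)]
    [∀ i, FiniteDimensional k (V i)]
    (hdim : ∀ i, finrank k (V i) = a i + 1)
    (f : ∀ i, V i →ₗ[k] k) (hf : ∀ i, f i ≠ 0)
    (Λ : Submodule k (⨂[k] i, V i))
    (hΛdef : Λ = Submodule.span k
      {w | ∃ v : ∀ i, V i,
        (∃ i j, i ≠ j ∧ f i (v i) = 0 ∧ f j (v j) = 0) ∧ w = ⨂ₜ[k] i, v i})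
    (F : (⨂[k] i, V i) →ₗ[k] k)
    (hF : F = PiTensorProduct.lift
      ((MultilinearMap.mkPiAlgebra k (Fin n) k).compLinearMap f)) :
    -- (1) the codimension of `Λ` is `1 + a₁ + ⋯ + aₙ`
    finrank k ((⨂[k] i, V i) ⧸ Λ) = 1 + ∑ i, a i ∧
    -- (2) `Λ ⊆ ker F`, so `F` descends to `F̄ = Λ.liftQ F _` on the quotient
    Λ ≤ LinearMap.ker F ∧
    -- (3) the projection is a bijection between the two charts
    ∀ hker : Λ ≤ LinearMap.ker F,
      ∃ e : {p : ∀ i, Projectivization k (V i) // ∀ i, f i ((p i).rep) ≠ 0} ≃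
            {w : Projectivization k ((⨂[k] i, V i) ⧸ Λ) //
              Λ.liftQ F hker w.rep ≠ 0},
        ∀ (v : ∀ i, V i) (hv : ∀ i, f i (v i) ≠ 0) (hv0 : ∀ i, v i ≠ 0)
          (hrep : ∀ i, f i ((Projectivization.mk k (v i) (hv0 i)).rep) ≠ 0)
          (hq0 : (Submodule.Quotient.mk (⨂ₜ[k] i, v i) : (⨂[k] i, V i) ⧸ Λ) ≠ 0),
          (e ⟨fun i => Projectivization.mk k (v i) (hv0 i), hrep⟩ : Projectivization k ((⨂[k] i, V i) ⧸ Λ)) =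
            Projectivization.mk k
              (Submodule.Quotient.mk (⨂ₜ[k] i, v i) : (⨂[k] i, V i) ⧸ Λ) hq0 :=
  segre_projection_birational_general k n a V hdim f hf Λ hΛdef F hF
end

section
/- Let k be a field and n ≥ 1. Define π : (k²)ⁿ → k^{n+1} by π(v)₀ = ∏_{i=1}^n yᵢ and π(v)ᵢ = xᵢ · ∏_{j≠i} yⱼ for 1 ≤ i ≤ n, where vᵢ = (xᵢ, yᵢ) ∈ k². Let q, r ∈ (k²)ⁿ be tuples with every rᵢ ≠ (0,0), and suppose yᵢ(q) ≠ 0 for all i. If π(r) = c · π(q) for some scalar c ∈ k, then either there exist nonzero scalars λ₁,…,λₙ with rᵢ = λᵢ · qᵢ for all i, or there exist two distinct indices k ≠ l with y_k(r) = 0 and y_l(r) = 0. (This says that the linear projection (ℙ¹)ⁿ ⇢ ℙⁿ from the span of the subvarieties P_{ij} = T₁×⋯×pᵢ×⋯×pⱼ×⋯×Tₙ, with pᵢ = [1:0], is injective — hence birational — on the open set where all yᵢ ≠ 0.) -/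
open Finset

/-- The Segre coordinates of `(ℙ¹)ⁿ` in which the coordinate `x` is chosen in
at most one factor: `π(v)₀ = ∏ᵢ yᵢ` and `π(v)ᵢ = xᵢ ∏_{j ≠ i} yⱼ`, where
`vᵢ = (xᵢ, yᵢ)`. These are exactly the Segre coordinates not vanishing on the
span of the subvarieties `P_{ij}` with `pᵢ = [1:0]`. -/
noncomputable def segreProj {k : Type} [Field k] {n : ℕ} (v : Fin n → k × k) :
    Fin (n + 1) → k :=
  Fin.cons (∏ i, (v i).2) (fun i => (v i).1 * ∏ j ∈ Finset.univ.erase i, (v j).2)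

/-- The linear projection `(ℙ¹)ⁿ ⇢ ℙⁿ` from the span of the subvarieties
`P_{ij}` (with `pᵢ = [1:0]`) is injective on the open chart where all `yᵢ ≠ 0`:
if `π(r)` is proportional to `π(q)` with all `yᵢ(q) ≠ 0` and all `rᵢ ≠ (0,0)`,
then either `r` equals `q` up to coordinatewise nonzero scalars, or `r` has two
coordinates with vanishing `y`, i.e. lies on some `P_{kl}`. -/
theorem segreProj_injective_on_chart (k : Type) [Field k] (n : ℕ) (hn : 1 ≤ n)
    (q r : Fin n → k × k)
    (hr : ∀ i, r i ≠ (0, 0))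
    (hq : ∀ i, (q i).2 ≠ 0)
    (c : k) (hπ : segreProj r = fun m => c * segreProj q m) :
    (∃ lam : Fin n → k, (∀ i, lam i ≠ 0) ∧ ∀ i, r i = lam i • q i) ∨
      ∃ k' l, k' ≠ l ∧ (r k').2 = 0 ∧ (r l).2 = 0 := by
  have h0 : (∏ i, (r i).2) = c * ∏ i, (q i).2 := by
    have := congrFun hπ 0
    simpa [segreProj] using this
  have hi : ∀ i : Fin n, (r i).1 * ∏ j ∈ univ.erase i, (r j).2
      = c * ((q i).1 * ∏ j ∈ univ.erase i, (q j).2) := by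
    intro i
    have := congrFun hπ i.succ
    simpa [segreProj] using this
  by_cases hall : ∀ i, (r i).2 ≠ 0
  · left
    have hPq : ∀ i : Fin n, (∏ j ∈ univ.erase i, (q j).2) ≠ 0 := fun i =>
      Finset.prod_ne_zero_iff.2 fun j _ => hq j
    have hPr : ∀ i : Fin n, (∏ j ∈ univ.erase i, (r j).2) ≠ 0 := fun i =>
      Finset.prod_ne_zero_iff.2 fun j _ => hall j
    have hcr : (∏ i, (r i).2) ≠ 0 := Finset.prod_ne_zero_iff.2 fun i _ => hall i
    have hc : c ≠ 0 := by
      intro h; rw [h, zero_mul] at h0; exact hcr h0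
    refine ⟨fun i => c * (∏ j ∈ univ.erase i, (q j).2) / (∏ j ∈ univ.erase i, (r j).2),
      fun i => div_ne_zero (mul_ne_zero hc (hPq i)) (hPr i), fun i => ?_⟩
    have hy : (r i).2 * (∏ j ∈ univ.erase i, (r j).2)
        = c * ((q i).2 * ∏ j ∈ univ.erase i, (q j).2) := by
      rw [← Finset.mul_prod_erase _ _ (Finset.mem_univ i),
        ← Finset.mul_prod_erase _ _ (Finset.mem_univ i)] at h0
      exact h0
    have hx := hi i
    have e1 : (r i).1 = c * (∏ j ∈ univ.erase i, (q j).2) / (∏ j ∈ univ.erase i, (r j).2) * (q i).1 := by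
      rw [div_mul_eq_mul_div, eq_div_iff (hPr i)]
      linear_combination hx
    have e2 : (r i).2 = c * (∏ j ∈ univ.erase i, (q j).2) / (∏ j ∈ univ.erase i, (r j).2) * (q i).2 := by
      rw [div_mul_eq_mul_div, eq_div_iff (hPr i)]
      linear_combination hy
    exact Prod.ext e1 e2
  · push_neg at hall
    obtain ⟨i, hi0⟩ := hall
    by_cases h2 : ∃ l, l ≠ i ∧ (r l).2 = 0
    · obtain ⟨l, hl, hl0⟩ := h2
      exact Or.inr ⟨l, i, hl, hl0, hi0⟩
    · push_neg at h2
      exfalso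
      have hPr : (∏ j ∈ univ.erase i, (r j).2) ≠ 0 :=
        Finset.prod_ne_zero_iff.2 fun j hj => h2 j (Finset.ne_of_mem_erase hj)
      have hc0 : c = 0 := by
        have : (∏ j, (r j).2) = 0 := by
          apply Finset.prod_eq_zero (Finset.mem_univ i) hi0
        rw [this] at h0
        rcases mul_eq_zero.1 h0.symm with h | h
        · exact h
        · exact absurd h (Finset.prod_ne_zero_iff.2 fun j _ => hq j)
      have := hi i
      rw [hc0, zero_mul] at this
      have hx0 : (r i).1 = 0 := by
        rcases mul_eq_zero.1 this with h | h
        · exact h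
        · exact absurd h hPr
      exact hr i (Prod.ext hx0 hi0)
end

section
/- Let k be a field, n ≥ 1, and a₁,…,aₙ ≥ 1. For each i let Vᵢ be a k-vector space of dimension aᵢ+1 with a nonzero linear functional fᵢ : Vᵢ → k. Let V = V₁ ⊗ ⋯ ⊗ Vₙ, let Λ ⊆ V be the span of all simple tensors v₁⊗⋯⊗vₙ with fᵢ(vᵢ) = 0 for at least two indices i, and let F : V → k be the functional with F(v₁⊗⋯⊗vₙ) = f₁(v₁)⋯fₙ(vₙ). Then for every w ∈ V with F(w) ≠ 0 there exist vectors v₁ ∈ V₁, …, vₙ ∈ Vₙ with fᵢ(vᵢ) ≠ 0 for all i such that w − v₁⊗⋯⊗vₙ ∈ Λ. (This is the surjectivity/dominance half of the assertion that the projection of the Segre variety from the span L of ⋃ 𝒫_{ij} is birational onto ℙ^{a₁+⋯+aₙ}: every point of the target chart {F̄ ≠ 0} of ℙ(V/Λ) is hit by a point of the source chart.) -/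
open PiTensorProduct Module

open scoped TensorProduct

section Aux

variable {k : Type} [Field k] {n : ℕ} {V : Fin n → Type} [∀ i, AddCommGroup (V i)]
  [∀ i, Module k (V i)] (f : ∀ i, V i →ₗ[k] k)

theorem aux_mem (Λ : Submodule k (⨂[k] i, V i))
    (hΛ : Λ = Submodule.span k
      {w | ∃ v : ∀ i, V i,
        (∃ i j, i ≠ j ∧ f i (v i) = 0 ∧ f j (v j) = 0) ∧ w = ⨂ₜ[k] i, v i})
    (u b : ∀ i, V i) (hu : ∀ i, f i (u i) = 0) :
    (⨂ₜ[k] i, (u i + b i)) - (⨂ₜ[k] i, b i)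
      - ∑ i, (⨂ₜ[k] j, Function.update b i (u i) j) ∈ Λ := by
  classical
  have h := (tprod k (s := V)).map_add_univ u b
  have hsplit : (Finset.univ : Finset (Finset (Fin n)))
      = insert ∅ ((Finset.univ.image fun i => ({i} : Finset (Fin n))) ∪
        Finset.univ.filter fun t : Finset (Fin n) => 2 ≤ t.card) := by
    ext t
    simp only [Finset.mem_univ, true_iff, Finset.mem_insert, Finset.mem_union,
      Finset.mem_image, Finset.mem_filter]
    rcases Nat.lt_or_ge t.card 2 with hc | hc
    · interval_cases hcard : t.card
      · exact Or.inl (Finset.card_eq_zero.mp hcard)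
      · obtain ⟨i, hi⟩ := Finset.card_eq_one.mp hcard
        exact Or.inr (Or.inl ⟨i, trivial, hi.symm⟩)
    · exact Or.inr (Or.inr ⟨trivial, hc⟩)
  have hdisj : Disjoint (Finset.univ.image fun i => ({i} : Finset (Fin n)))
      (Finset.univ.filter fun t : Finset (Fin n) => 2 ≤ t.card) := by
    rw [Finset.disjoint_left]
    rintro t ht ht'
    simp only [Finset.mem_image] at ht
    obtain ⟨i, -, rfl⟩ := ht
    simp at ht'
  have hne : (∅ : Finset (Fin n)) ∉
      ((Finset.univ.image fun i => ({i} : Finset (Fin n))) ∪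
        Finset.univ.filter fun t : Finset (Fin n) => 2 ≤ t.card) := by
    simp only [Finset.mem_union, Finset.mem_image, Finset.mem_filter]
    rintro (⟨i, -, hi⟩ | ⟨-, h2⟩)
    · exact Finset.singleton_ne_empty i hi
    · simp at h2
  rw [hsplit, Finset.sum_insert hne, Finset.sum_union hdisj,
    Finset.sum_image (fun i _ j _ h => Finset.singleton_injective h)] at h
  simp only [Finset.piecewise_empty, Finset.piecewise_singleton] at h
  have heq : (⨂ₜ[k] i, (u i + b i)) - (⨂ₜ[k] i, b i)
      - ∑ i, (⨂ₜ[k] j, Function.update b i (u i) j)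
      = ∑ t ∈ Finset.univ.filter fun t : Finset (Fin n) => 2 ≤ t.card,
          tprod k (t.piecewise u b) := by
    have : (⨂ₜ[k] i, (u i + b i)) = tprod k (u + b) := rfl
    rw [this, h]; abel
  rw [heq]
  refine Submodule.sum_mem Λ fun t ht => ?_
  simp only [Finset.mem_filter] at ht
  obtain ⟨i, hi, j, hj, hij⟩ := Finset.one_lt_card.mp (by omega : 1 < t.card)
  rw [hΛ]
  exact Submodule.subset_span ⟨t.piecewise u b, ⟨i, j, hij,
    by rw [Finset.piecewise_eq_of_mem _ _ _ hi]; exact hu i,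
    by rw [Finset.piecewise_eq_of_mem _ _ _ hj]; exact hu j⟩, rfl⟩

theorem repr_exists (Λ : Submodule k (⨂[k] i, V i))
    (hΛ : Λ = Submodule.span k
      {w | ∃ v : ∀ i, V i,
        (∃ i j, i ≠ j ∧ f i (v i) = 0 ∧ f j (v j) = 0) ∧ w = ⨂ₜ[k] i, v i})
    (e : ∀ i, V i) (he : ∀ i, f i (e i) = 1) (w : ⨂[k] i, V i) :
    ∃ c : k, ∃ u : ∀ i, V i, (∀ i, f i (u i) = 0) ∧
      w - (c • (⨂ₜ[k] i, e i)
        + ∑ i, (⨂ₜ[k] j, Function.update e i (u i) j)) ∈ Λ := by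
  classical
  induction w using PiTensorProduct.induction_on with
  | smul_tprod r v =>
    set m : ∀ i, V i := fun i => f i (v i) • e i with hm
    set u' : ∀ i, V i := fun i => v i - m i with hu'
    have hu'0 : ∀ i, f i (u' i) = 0 := by
      intro i; simp [hu', hm, he i, mul_comm]
    set P : Fin n → k := fun i => ∏ j ∈ Finset.univ.erase i, f j (v j) with hP
    refine ⟨r * ∏ i, f i (v i), fun i => (r * P i) • u' i,
      fun i => by simp [hu'0 i], ?_⟩
    have key := aux_mem f Λ hΛ u' m hu'0
    have hvm : (⨂ₜ[k] i, (u' i + m i)) = ⨂ₜ[k] i, v i := by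
      congr 1; funext i; simp [hu']
    have hme : (⨂ₜ[k] i, m i) = (∏ i, f i (v i)) • ⨂ₜ[k] i, e i := by
      exact MultilinearMap.map_smul_univ (PiTensorProduct.tprod k) (fun i => f i (v i)) e
    have hslot : ∀ i, (⨂ₜ[k] j, Function.update m i (u' i) j)
        = P i • ⨂ₜ[k] j, Function.update e i (u' i) j := by
      intro i
      have h1 : Function.update m i (u' i)
          = fun j => (if j = i then (1 : k) else f j (v j)) •
              Function.update e i (u' i) j := by
        funext j
        rcases eq_or_ne j i with rfl | hji
        · simp [Function.update]
        · simp [Function.update, hji, hm]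
      rw [h1, MultilinearMap.map_smul_univ]
      congr 1
      rw [← Finset.prod_erase_mul _ _ (Finset.mem_univ i), if_pos rfl, mul_one, hP]
      exact Finset.prod_congr rfl fun j hj => if_neg (Finset.ne_of_mem_erase hj)
    have hslot2 : ∀ i, (⨂ₜ[k] j, Function.update e i ((r * P i) • u' i) j)
        = (r * P i) • ⨂ₜ[k] j, Function.update e i (u' i) j :=
      fun i => MultilinearMap.map_update_smul (PiTensorProduct.tprod k) e i (r * P i) (u' i)
    rw [hvm, hme] at key
    have := Submodule.smul_mem Λ r key
    convert this using 1
    simp only [hslot2, hslot, smul_sub, Finset.smul_sum, smul_smul,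
      sub_add_eq_sub_sub]
  | add x y hx hy =>
    obtain ⟨c₁, u₁, hu₁, h₁⟩ := hx
    obtain ⟨c₂, u₂, hu₂, h₂⟩ := hy
    refine ⟨c₁ + c₂, fun i => u₁ i + u₂ i, fun i => by simp [hu₁ i, hu₂ i], ?_⟩
    have hadd : ∀ i, (⨂ₜ[k] j, Function.update e i (u₁ i + u₂ i) j)
        = (⨂ₜ[k] j, Function.update e i (u₁ i) j)
          + ⨂ₜ[k] j, Function.update e i (u₂ i) j :=
      fun i => MultilinearMap.map_update_add (PiTensorProduct.tprod k) e i (u₁ i) (u₂ i)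
    have := Submodule.add_mem Λ h₁ h₂
    convert this using 1
    simp only [hadd, add_smul, Finset.sum_add_distrib]
    abel

end Aux

/-- The dominance half of the birationality of the projection of the Segre
variety `ℙ(V₁) × ⋯ × ℙ(Vₙ)` from the span `L` of `⋃ 𝒫_{ij}`: if `Λ` is the span
of the simple tensors with at least two coordinates in the hyperplanes
`fᵢ = 0`, and `F` is the functional `v₁ ⊗ ⋯ ⊗ vₙ ↦ f₁(v₁)⋯fₙ(vₙ)`, then every
`w` with `F w ≠ 0` is congruent modulo `Λ` to a simple tensor `v₁ ⊗ ⋯ ⊗ vₙ`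
with all `fᵢ(vᵢ) ≠ 0`. -/
theorem exists_simple_tensor_congruent_mod_span (k : Type) [Field k]
    (n : ℕ) (hn : 1 ≤ n) (a : Fin n → ℕ) (ha : ∀ i, 1 ≤ a i)
    (V : Fin n → Type) [∀ i, AddCommGroup (V i)] [∀ i, Module k (V i)]
    [∀ i, FiniteDimensional k (V i)]
    (hdim : ∀ i, finrank k (V i) = a i + 1)
    (f : ∀ i, V i →ₗ[k] k) (hf : ∀ i, f i ≠ 0)
    (Λ : Submodule k (⨂[k] i, V i))
    (hΛ : Λ = Submodule.span k
      {w | ∃ v : ∀ i, V i,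
        (∃ i j, i ≠ j ∧ f i (v i) = 0 ∧ f j (v j) = 0) ∧ w = ⨂ₜ[k] i, v i})
    (F : (⨂[k] i, V i) →ₗ[k] k)
    (hF : F = PiTensorProduct.lift
      ((MultilinearMap.mkPiAlgebra k (Fin n) k).compLinearMap f)) :
    ∀ w : ⨂[k] i, V i, F w ≠ 0 →
      ∃ v : ∀ i, V i, (∀ i, f i (v i) ≠ 0) ∧ w - (⨂ₜ[k] i, v i) ∈ Λ := by
  classical
  have he' : ∀ i, ∃ y, f i y = 1 := by
    intro i
    obtain ⟨x, hx⟩ := DFunLike.ne_iff.mp (hf i)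
    simp only [LinearMap.zero_apply] at hx
    exact ⟨(f i x)⁻¹ • x, by simp [inv_mul_cancel₀ hx]⟩
  choose e he using he'
  have hFt : ∀ v : ∀ i, V i, F (⨂ₜ[k] i, v i) = ∏ i, f i (v i) := by
    intro v; simp [hF]
  have hΛF : ∀ x ∈ Λ, F x = 0 := by
    intro x hx
    rw [hΛ] at hx
    refine Submodule.span_induction ?_ (by simp) (fun _ _ _ _ h1 h2 => by
      simp [h1, h2]) (fun r _ _ h1 => by simp [h1]) hx
    rintro _ ⟨v, ⟨i, j, hij, hi, hj⟩, rfl⟩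
    rw [hFt]
    exact Finset.prod_eq_zero (Finset.mem_univ i) hi
  intro w hw
  obtain ⟨c, u, hu, hmem⟩ := repr_exists f Λ hΛ e he w
  have hFslot : ∀ i, F (⨂ₜ[k] j, Function.update e i (u i) j) = 0 := by
    intro i
    rw [hFt]
    refine Finset.prod_eq_zero (Finset.mem_univ i) ?_
    simp [hu i]
  have hc : F w = c := by
    have h0 := hΛF _ hmem
    rw [map_sub, map_add, map_smul, hFt, map_sum, sub_eq_zero] at h0
    simp only [hFslot, Finset.sum_const_zero, add_zero, he, Finset.prod_const_one,
      smul_eq_mul, mul_one] at h0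
    exact h0
  have hc0 : c ≠ 0 := hc ▸ hw
  set i0 : Fin n := ⟨0, hn⟩ with hi0
  set b : ∀ i, V i := fun i => (if i = i0 then c else 1) • e i with hb
  set u' : ∀ i, V i := fun i => (if i = i0 then (1 : k) else c⁻¹) • u i with hu'
  have hu2 : ∀ i, f i (u' i) = 0 := by
    intro i; by_cases h : i = i0 <;> simp [hu', h, hu i]
  refine ⟨fun i => u' i + b i, ?_, ?_⟩
  · intro i
    simp only [map_add, hu', hb, map_smul, hu i, he i, smul_eq_mul, mul_zero,
      mul_one, zero_add]
    split <;> simp [hc0]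
  · have key := aux_mem f Λ hΛ u' b hu2
    have hbe : (⨂ₜ[k] i, b i) = c • ⨂ₜ[k] i, e i := by
      rw [show (⨂ₜ[k] i, b i)
          = (∏ i, if i = i0 then c else 1) • ⨂ₜ[k] i, e i from
        MultilinearMap.map_smul_univ (PiTensorProduct.tprod k) _ e]
      congr 1
      rw [Finset.prod_ite_eq' Finset.univ i0 fun _ => c]
      simp
    have hslot : ∀ i, (⨂ₜ[k] j, Function.update b i (u' i) j)
        = ⨂ₜ[k] j, Function.update e i (u i) j := by
      intro i
      have h1 : Function.update b i (u' i)
          = fun j => (if j = i then (if i = i0 then (1 : k) else c⁻¹)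
              else (if j = i0 then c else 1)) • Function.update e i (u i) j := by
        funext j
        rcases eq_or_ne j i with rfl | hji
        · simp [Function.update, hu']
        · simp [Function.update, hji, hb]
      rw [h1, MultilinearMap.map_smul_univ]
      rw [← Finset.prod_erase_mul _ _ (Finset.mem_univ i), if_pos rfl]
      rw [Finset.prod_congr rfl fun j hj =>
        if_neg (Finset.ne_of_mem_erase hj)]
      rw [Finset.prod_ite_eq' _ i0 fun _ => c]
      rcases eq_or_ne i i0 with rfl | hii0
      · simp
      · rw [if_pos (Finset.mem_erase.mpr ⟨Ne.symm hii0, Finset.mem_univ _⟩),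
          if_neg hii0, mul_inv_cancel₀ hc0, one_smul]
    rw [hbe] at key
    simp only [hslot] at key
    have := Submodule.sub_mem Λ hmem key
    convert this using 1
    abel
end
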